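/- Let R̄ be a commutative ring of characteristic p. Any relatively perfect commutative R̄-algebra S̄ (i.e. one whose relative Frobenius Frob_{S̄/R̄} : S̄ ⊗_{ψ, Frob_{R̄}} R̄ → S̄ is an isomorphism) is formally étale over R̄. -/

import Mathlib

/-- `R` viewed as an `R`-module through the Frobenius endomorphism `a ↦ aᵖ`. -/
def FrobTwist (p : ℕ) (R : Type*) : Type _ := R

/-- The identity of `R`, viewed as a map `FrobTwist p R → R`. -/
def FrobTwist.val {p : ℕ} {R : Type*} (x : FrobTwist p R) : R := x

instance (p : ℕ) (R : Type*) [CommRing R] : AddCommGroup (FrobTwist p R) :=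
  inferInstanceAs (AddCommGroup R)

noncomputable instance (p : ℕ) [Fact p.Prime] (R : Type*) [CommRing R] [CharP R p] :
    Module R (FrobTwist p R) :=
  Module.compHom (R := R) R (frobenius R p)

/-- The relative Frobenius `S ⊗_{ψ, Frob_R} R → S`, `s ⊗ r ↦ s^p * ψ(r)`, as an additive
map on the tensor product of `S` (with its usual `R`-module structure) and `R` (with the
Frobenius-twisted `R`-module structure). -/
noncomputable def relativeFrobenius (p : ℕ) [Fact p.Prime] (R S : Type*) [CommRing R]
    [CommRing S] [Algebra R S] [CharP R p] [CharP S p] :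
    TensorProduct R S (FrobTwist p R) →+ S :=
  TensorProduct.liftAddHom
    (AddMonoidHom.mk'
      (fun s => AddMonoidHom.mk' (fun r : FrobTwist p R => s ^ p * algebraMap R S r.val)
        (fun r r' => by
          show s ^ p * algebraMap R S (r.val + r'.val) = _
          rw [map_add, mul_add]))
      (fun s t => by
        ext r
        show (s + t) ^ p * algebraMap R S r.val =
          s ^ p * algebraMap R S r.val + t ^ p * algebraMap R S r.val
        haveI : ExpChar S p := ExpChar.prime Fact.out
        rw [add_pow_char, add_mul]))
    (fun a s r => by
      show (a • s) ^ p * algebraMap R S r.val =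
        s ^ p * algebraMap R S (frobenius R p a * r.val)
      rw [Algebra.smul_def, mul_pow, ← map_pow, map_mul, frobenius_def]
      ring)

/-!
If `I ⊆ B` is a square-zero ideal and `p = 0` in `B`, then `(b + i) ^ p = b ^ p` for `i ∈ I`, so
`x ↦ (any lift of x) ^ p` is a ring map `B ⧸ I → B`. Relative perfectness says that `S` is
additively generated by the elements `s ^ p * ψ r`, subject only to the relations of the
tensor product `S ⊗_{ψ, Frob} R`. An `R`-algebra map `g : S → B` sends `s ^ p * ψ r` to
`g s ^ p * r`, which depends only on `g` modulo `I`: this gives uniqueness of lifts. Conversely,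
for `f : S → B ⧸ I`, the formula `s ^ p * ψ r ↦ (lift of f s) ^ p * r` is well defined on `S`
and multiplicative, because the products `s ^ p * ψ r` multiply like pure tensors: this gives a
lift.
-/

theorem pow_eq_zero_of_mem_of_sq_eq_bot {B : Type*} [CommRing B] {I : Ideal B} (hI : I ^ 2 = ⊥)
    {n : ℕ} (hn : 2 ≤ n) {i : B} (hi : i ∈ I) : i ^ n = 0 :=
  pow_eq_zero_of_le hn <| by simpa [hI] using Ideal.pow_mem_pow hi 2

section SquareZero

variable {B : Type*} [CommRing B] {p : ℕ} (hp : p.Prime) (hpB : (p : B) = 0)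

/-- Unlike `frobenius`, this needs no `ExpChar B p`, which fails when `B` is the zero ring. -/
def frobeniusOfNatCastEqZero : B →+* B where
  __ := powMonoidHom p
  map_zero' := zero_pow hp.ne_zero
  map_add' x y := by
    obtain ⟨r, hr⟩ := exists_add_pow_prime_eq hp x y
    simp [hr, hpB]

variable {I : Ideal B} (hI : I ^ 2 = ⊥)

def Ideal.Quotient.frobeniusLift : B ⧸ I →+* B :=
  Ideal.Quotient.lift I (frobeniusOfNatCastEqZero hp hpB)
    fun _ hi => pow_eq_zero_of_mem_of_sq_eq_bot hI hp.two_le hi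

@[simp]
theorem Ideal.Quotient.frobeniusLift_mk (b : B) :
    frobeniusLift hp hpB hI (Ideal.Quotient.mk I b) = b ^ p := rfl

@[simp]
theorem Ideal.Quotient.mk_frobeniusLift (x : B ⧸ I) :
    Ideal.Quotient.mk I (frobeniusLift hp hpB hI x) = x ^ p := by
  obtain ⟨b, rfl⟩ := Ideal.Quotient.mk_surjective x
  simp

end SquareZero

theorem Ideal.Quotient.pow_eq_pow_of_mk_eq_mk {B : Type*} [CommRing B] {p : ℕ} (hp : p.Prime)
    (hpB : (p : B) = 0) {I : Ideal B} (hI : I ^ 2 = ⊥) {a b : B}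
    (h : Ideal.Quotient.mk I a = Ideal.Quotient.mk I b) : a ^ p = b ^ p := by
  simpa using congrArg (frobeniusLift hp hpB hI) h

theorem natCast_eq_zero_of_algebra (p : ℕ) (R : Type*) {B : Type*} [CommRing R] [CommRing B]
    [Algebra R B] [CharP R p] : (p : B) = 0 := by
  rw [← map_natCast (algebraMap R B), CharP.cast_eq_zero, map_zero]

section RelativeFrobenius

variable {p : ℕ} [Fact p.Prime] {R S B : Type*} [CommRing R] [CommRing S] [CommRing B]
  [Algebra R S] [Algebra R B] [CharP R p]

noncomputable def frobeniusTwistLift (φ : S →+* B)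
    (hφ : ∀ a, φ (algebraMap R S a) = algebraMap R B a ^ p) :
    TensorProduct R S (FrobTwist p R) →+ B :=
  TensorProduct.liftAddHom
    (AddMonoidHom.mk'
      (fun s => AddMonoidHom.mk' (fun r : FrobTwist p R => φ s * algebraMap R B r.val)
        fun r r' => by
          show φ s * algebraMap R B (r.val + r'.val) = _
          rw [map_add, mul_add])
      fun _ _ => by
        ext
        simp only [AddMonoidHom.mk'_apply, map_add, add_mul, AddMonoidHom.add_apply])
    fun a s r => by
      show φ (a • s) * algebraMap R B r.val = φ s * algebraMap R B (frobenius R p a * r.val)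
      rw [Algebra.smul_def, map_mul, hφ, map_mul, frobenius_def, map_pow]
      ring

variable [CharP S p]

variable (p) in
theorem relativeFrobenius_tmul (s : S) (r : R) :
    relativeFrobenius p R S (s ⊗ₜ (r : FrobTwist p R)) = s ^ p * algebraMap R S r := rfl

theorem addMonoidHom_ext_of_surjective_relativeFrobenius
    (hRP : Function.Surjective (relativeFrobenius p R S)) {M : Type*} [AddCommMonoid M]
    {F G : S →+ M}
    (h : ∀ (s : S) (r : R), F (s ^ p * algebraMap R S r) = G (s ^ p * algebraMap R S r)) :
    F = G := by
  refine (AddMonoidHom.cancel_right hRP).1 (AddMonoidHom.ext fun x => ?_)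
  induction x using TensorProduct.induction_on with
  | zero => simp only [map_zero]
  | tmul s r => exact h s r
  | add x y hx hy => simp only [map_add, hx, hy]

theorem algHom_ext_of_pow_eq_pow (hRP : Function.Surjective (relativeFrobenius p R S))
    {g₁ g₂ : S →ₐ[R] B} (h : ∀ s, g₁ s ^ p = g₂ s ^ p) : g₁ = g₂ :=
  AlgHom.coe_addMonoidHom_injective <|
    addMonoidHom_ext_of_surjective_relativeFrobenius hRP fun s r => by simp [h]

section Lift

variable (hRP : Function.Bijective (relativeFrobenius p R S)) (φ : S →+* B)
  (hφ : ∀ a, φ (algebraMap R S a) = algebraMap R B a ^ p)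

noncomputable def relativelyPerfectLiftAddHom : S →+ B :=
  (frobeniusTwistLift φ hφ).comp (AddEquiv.ofBijective _ hRP).symm.toAddMonoidHom

theorem relativelyPerfectLiftAddHom_pow_mul (s : S) (r : R) :
    relativelyPerfectLiftAddHom hRP φ hφ (s ^ p * algebraMap R S r) =
      φ s * algebraMap R B r := by
  rw [← relativeFrobenius_tmul]
  exact congrArg (frobeniusTwistLift φ hφ)
    ((AddEquiv.ofBijective _ hRP).symm_apply_apply (s ⊗ₜ r))

theorem relativelyPerfectLiftAddHom_mul (a b : S) :
    relativelyPerfectLiftAddHom hRP φ hφ (a * b) =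
      relativelyPerfectLiftAddHom hRP φ hφ a * relativelyPerfectLiftAddHom hRP φ hφ b := by
  refine (AddMonoidHom.map_mul_iff _).2 ?_ a b
  refine addMonoidHom_ext_of_surjective_relativeFrobenius hRP.2 fun s r =>
    addMonoidHom_ext_of_surjective_relativeFrobenius hRP.2 fun t r' => ?_
  have hprod : s ^ p * algebraMap R S r * (t ^ p * algebraMap R S r') =
      (s * t) ^ p * algebraMap R S (r * r') := by
    rw [mul_pow, map_mul]
    ring
  simp only [AddMonoidHom.compr₂_apply, AddMonoidHom.compl₂_apply, AddMonoidHom.comp_apply,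
    AddMonoidHom.mul_apply]
  rw [hprod, relativelyPerfectLiftAddHom_pow_mul, relativelyPerfectLiftAddHom_pow_mul,
    relativelyPerfectLiftAddHom_pow_mul, map_mul, map_mul]
  ring

theorem relativelyPerfectLiftAddHom_algebraMap (a : R) :
    relativelyPerfectLiftAddHom hRP φ hφ (algebraMap R S a) = algebraMap R B a := by
  simpa using relativelyPerfectLiftAddHom_pow_mul hRP φ hφ 1 a

noncomputable def relativelyPerfectLift : S →ₐ[R] B :=
  { relativelyPerfectLiftAddHom hRP φ hφ with
    map_one' := by simpa using relativelyPerfectLiftAddHom_algebraMap hRP φ hφ 1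
    map_mul' := relativelyPerfectLiftAddHom_mul hRP φ hφ
    commutes' := relativelyPerfectLiftAddHom_algebraMap hRP φ hφ }

theorem relativelyPerfectLift_pow_mul (s : S) (r : R) :
    relativelyPerfectLift hRP φ hφ (s ^ p * algebraMap R S r) = φ s * algebraMap R B r :=
  relativelyPerfectLiftAddHom_pow_mul hRP φ hφ s r

end Lift

end RelativeFrobenius

section SquareZeroLift

variable {p : ℕ} [Fact p.Prime] {R B : Type*} [CommRing R] [CommRing B] [Algebra R B] [CharP R p]
  {I : Ideal B} (hI : I ^ 2 = ⊥)

theorem Ideal.Quotient.frobeniusLift_algebraMap (a : R) :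
    frobeniusLift Fact.out (natCast_eq_zero_of_algebra p R) hI (algebraMap R (B ⧸ I) a) =
      algebraMap R B a ^ p :=
  frobeniusLift_mk _ _ hI (algebraMap R B a)

variable {S : Type*} [CommRing S] [Algebra R S] [CharP S p]
  (hRP : Function.Bijective (relativeFrobenius p R S)) (f : S →ₐ[R] B ⧸ I)

noncomputable def squareZeroLift : S →ₐ[R] B :=
  relativelyPerfectLift hRP
    ((Ideal.Quotient.frobeniusLift Fact.out (natCast_eq_zero_of_algebra p R) hI).comp f)
    fun a => by simp [Ideal.Quotient.frobeniusLift_algebraMap]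

theorem mkₐ_comp_squareZeroLift : (Ideal.Quotient.mkₐ R I).comp (squareZeroLift hI hRP f) = f :=
  AlgHom.coe_addMonoidHom_injective <|
    addMonoidHom_ext_of_surjective_relativeFrobenius hRP.2 fun s r => by
      simp [squareZeroLift, relativelyPerfectLift_pow_mul]

end SquareZeroLift

universe u

/-- a relatively perfect commutative algebra in characteristic `p`
(i.e. one whose relative Frobenius is an isomorphism) is formally étale. -/
theorem relativelyPerfect_formallyEtale (p : ℕ) [Fact p.Prime] (R S : Type u)
    [CommRing R] [CommRing S] [Algebra R S] [CharP R p] [CharP S p]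
    (hRP : Function.Bijective (relativeFrobenius p R S)) :
    Algebra.FormallyEtale R S := by
  rw [Algebra.FormallyEtale.iff_comp_bijective]
  intro B _ _ I hI
  refine ⟨fun g₁ g₂ h => algHom_ext_of_pow_eq_pow hRP.2 fun s => ?_,
    fun f => ⟨squareZeroLift hI hRP f, mkₐ_comp_squareZeroLift hI hRP f⟩⟩
  exact Ideal.Quotient.pow_eq_pow_of_mk_eq_mk Fact.out (natCast_eq_zero_of_algebra p R) hI
    (AlgHom.congr_fun h s)
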